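/- In the signed graphon model with C₁ ≤ F, G ≤ 1 and sign sparsity s_n ≤ 1/2 with s_n C₁ and (1 - s_n) bounded below, the conditional probability that a triangle is of type 3 (exactly two negative edges) given that it is a triangle is of order s_n²: there exist constants c, C > 0 with c·s_n² ≤ P(type-3 | triangle) ≤ C·s_n². -/
import Mathlib

open MeasureTheory

open Set

lemma card_filter_eq_two_iff (p : Fin 3 → Prop) [DecidablePred p] :
    (Finset.univ.filter p).card = 2 ↔
      (p 0 ∧ p 1 ∧ ¬ p 2) ∨ (p 0 ∧ ¬ p 1 ∧ p 2) ∨ (¬ p 0 ∧ p 1 ∧ p 2) := by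
  rw [Finset.card_filter, Fin.sum_univ_three]
  by_cases h0 : p 0 <;> by_cases h1 : p 1 <;> by_cases h2 : p 2 <;> simp [h0, h1, h2]

lemma pi3_apply (ν : Measure ℝ) [SigmaFinite ν] (a b c : Set ℝ) :
    Measure.pi (fun _ : Fin 3 => ν) {u : Fin 3 → ℝ | u 0 ∈ a ∧ u 1 ∈ b ∧ u 2 ∈ c}
      = ν a * ν b * ν c := by
  have h : {u : Fin 3 → ℝ | u 0 ∈ a ∧ u 1 ∈ b ∧ u 2 ∈ c} = Set.univ.pi ![a, b, c] := by
    ext u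
    constructor
    · rintro ⟨h0, h1, h2⟩ i _
      fin_cases i <;> simpa
    · intro h
      exact ⟨h 0 trivial, h 1 trivial, h 2 trivial⟩
  rw [h, Measure.pi_pi, Fin.prod_univ_three]
  simp

lemma nu_univ : (volume.restrict (Set.Icc (0:ℝ) 1)) Set.univ = 1 := by
  simp [Real.volume_Icc]

lemma nu_prob : IsProbabilityMeasure (volume.restrict (Set.Icc (0:ℝ) 1)) := ⟨nu_univ⟩

lemma nu_Iio (t : ℝ) (h0 : 0 ≤ t) (h1 : t ≤ 1) :
    (volume.restrict (Set.Icc (0:ℝ) 1)) (Set.Iio t) = ENNReal.ofReal t := by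
  rw [Measure.restrict_apply measurableSet_Iio]
  have : Set.Iio t ∩ Set.Icc (0:ℝ) 1 = Set.Ico 0 t := by
    ext u
    simp only [Set.mem_inter_iff, Set.mem_Iio, Set.mem_Icc, Set.mem_Ico]
    constructor
    · rintro ⟨h, hu0, _⟩; exact ⟨hu0, h⟩
    · rintro ⟨hu0, h⟩; exact ⟨h, hu0, h.le.trans h1⟩
  rw [this, Real.volume_Ico, sub_zero]

lemma nu_Iio_le (t : ℝ) :
    (volume.restrict (Set.Icc (0:ℝ) 1)) (Set.Iio t) ≤ ENNReal.ofReal t := by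
  rw [Measure.restrict_apply measurableSet_Iio]
  refine le_trans (measure_mono ?_) (le_of_eq (by rw [Real.volume_Ico, sub_zero]))
  rintro u ⟨h, hu0, _⟩
  exact ⟨hu0, h⟩

lemma nu_Ici (t : ℝ) (h0 : 0 ≤ t) :
    (volume.restrict (Set.Icc (0:ℝ) 1)) (Set.Ici t) = ENNReal.ofReal (1 - t) := by
  rw [Measure.restrict_apply measurableSet_Ici]
  have : Set.Ici t ∩ Set.Icc (0:ℝ) 1 = Set.Icc t 1 := by
    ext u
    simp only [Set.mem_inter_iff, Set.mem_Ici, Set.mem_Icc]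
    constructor
    · rintro ⟨h, _, h1⟩; exact ⟨h, h1⟩
    · rintro ⟨h, h1⟩; exact ⟨h, h0.trans h, h1⟩
  rw [this, Real.volume_Icc]

lemma type3_aux (C₁ : ℝ) (hC₁ : 0 < C₁) (F G : ℝ → ℝ → ℝ)
    (hF : Measurable fun p : ℝ × ℝ => F p.1 p.2)
    (hG : Measurable fun p : ℝ × ℝ => G p.1 p.2)
    (hFlo : ∀ x y, C₁ ≤ F x y) (hFhi : ∀ x y, F x y ≤ 1)
    (hGlo : ∀ x y, C₁ ≤ G x y) (hGhi : ∀ x y, G x y ≤ 1)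
    (ρ s : ℝ) (hρ : 0 < ρ) (hρ1 : ρ ≤ 1) (hs : 0 < s) (hs2 : s ≤ 1 / 2) :
    let ν : Measure ℝ := volume.restrict (Set.Icc 0 1)
    let μ : Measure ((Fin 3 → ℝ) × (Fin 3 → ℝ) × (Fin 3 → ℝ)) :=
      (Measure.pi fun _ : Fin 3 => ν).prod
        ((Measure.pi fun _ : Fin 3 => ν).prod (Measure.pi fun _ : Fin 3 => ν))
    let T : Set ((Fin 3 → ℝ) × (Fin 3 → ℝ) × (Fin 3 → ℝ)) :=
      {ω | ω.2.1 0 < ρ * F (ω.1 0) (ω.1 1) ∧ ω.2.1 1 < ρ * F (ω.1 0) (ω.1 2) ∧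
           ω.2.1 2 < ρ * F (ω.1 1) (ω.1 2)}
    let T₃ : Set ((Fin 3 → ℝ) × (Fin 3 → ℝ) × (Fin 3 → ℝ)) :=
      T ∩ {ω | (Finset.univ.filter (fun e : Fin 3 =>
            ω.2.2 e < s * G (ω.1 (if e = 2 then 1 else 0))
                          (ω.1 (if e = 0 then 1 else 2)))).card = 2}
    C₁ ^ 2 / 2 * s ^ 2 ≤ (μ T₃).toReal / (μ T).toReal ∧
      (μ T₃).toReal / (μ T).toReal ≤ 3 * s ^ 2 := by
  intro ν μ T T₃
  haveI : IsProbabilityMeasure ν := nu_prob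
  haveI : IsProbabilityMeasure (Measure.pi fun _ : Fin 3 => ν) := inferInstance
  have hC₁1 : C₁ ≤ 1 := le_trans (hGlo 0 0) (hGhi 0 0)
  have hs1 : s ≤ 1 := hs2.trans (by norm_num)
  -- measurability of coordinates
  have mx : ∀ i : Fin 3, Measurable
      fun ω : (Fin 3 → ℝ) × (Fin 3 → ℝ) × (Fin 3 → ℝ) => ω.1 i :=
    fun i => (measurable_pi_apply i).comp measurable_fst
  have mu : ∀ i : Fin 3, Measurable
      fun ω : (Fin 3 → ℝ) × (Fin 3 → ℝ) × (Fin 3 → ℝ) => ω.2.1 i :=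
    fun i => (measurable_pi_apply i).comp measurable_snd.fst
  have mv : ∀ i : Fin 3, Measurable
      fun ω : (Fin 3 → ℝ) × (Fin 3 → ℝ) × (Fin 3 → ℝ) => ω.2.2 i :=
    fun i => (measurable_pi_apply i).comp measurable_snd.snd
  have mF : ∀ i j : Fin 3, Measurable
      fun ω : (Fin 3 → ℝ) × (Fin 3 → ℝ) × (Fin 3 → ℝ) => ρ * F (ω.1 i) (ω.1 j) :=
    fun i j => measurable_const.mul (hF.comp ((mx i).prodMk (mx j)))
  have mG : ∀ i j : Fin 3, Measurable
      fun ω : (Fin 3 → ℝ) × (Fin 3 → ℝ) × (Fin 3 → ℝ) => s * G (ω.1 i) (ω.1 j) :=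
    fun i j => measurable_const.mul (hG.comp ((mx i).prodMk (mx j)))
  have hTmeas : MeasurableSet T :=
    (measurableSet_lt (mu 0) (mF 0 1)).inter
      ((measurableSet_lt (mu 1) (mF 0 2)).inter (measurableSet_lt (mu 2) (mF 1 2)))
  -- the sign sets
  set S : Fin 3 → Set ((Fin 3 → ℝ) × (Fin 3 → ℝ) × (Fin 3 → ℝ)) :=
    fun e => {ω | ω.2.2 e < s * G (ω.1 (if e = 2 then 1 else 0))
                          (ω.1 (if e = 0 then 1 else 2))} with hS
  have mS : ∀ e, MeasurableSet (S e) := fun e => measurableSet_lt (mv e) (mG _ _)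
  have hsplit : {ω : (Fin 3 → ℝ) × (Fin 3 → ℝ) × (Fin 3 → ℝ) |
      (Finset.univ.filter (fun e : Fin 3 =>
        ω.2.2 e < s * G (ω.1 (if e = 2 then 1 else 0))
                      (ω.1 (if e = 0 then 1 else 2)))).card = 2} =
      (S 0 ∩ S 1 ∩ (S 2)ᶜ) ∪ ((S 0 ∩ (S 1)ᶜ ∩ S 2) ∪ ((S 0)ᶜ ∩ S 1 ∩ S 2)) := by
    ext ω
    rw [Set.mem_setOf_eq, card_filter_eq_two_iff]
    simp only [hS, Set.mem_union, Set.mem_inter_iff, Set.mem_compl_iff, Set.mem_setOf_eq]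
    tauto
  have hT3meas : MeasurableSet T₃ := by
    refine hTmeas.inter ?_
    rw [hsplit]
    exact (((mS 0).inter (mS 1)).inter (mS 2).compl).union
      ((((mS 0).inter (mS 1).compl).inter (mS 2)).union
        (((mS 0).compl.inter (mS 1)).inter (mS 2)))
  -- section computations
  set P : (Fin 3 → ℝ) → ENNReal := fun x => (Measure.pi fun _ : Fin 3 => ν)
    {u : Fin 3 → ℝ | u 0 < ρ * F (x 0) (x 1) ∧ u 1 < ρ * F (x 0) (x 2) ∧
      u 2 < ρ * F (x 1) (x 2)} with hPdef
  set Q : (Fin 3 → ℝ) → ENNReal := fun x => (Measure.pi fun _ : Fin 3 => ν)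
    {v : Fin 3 → ℝ | (Finset.univ.filter (fun e : Fin 3 =>
        v e < s * G (x (if e = 2 then 1 else 0)) (x (if e = 0 then 1 else 2)))).card = 2}
    with hQdef
  have hTsec : ∀ x : Fin 3 → ℝ, Prod.mk x ⁻¹' T =
      ({u : Fin 3 → ℝ | u 0 < ρ * F (x 0) (x 1) ∧ u 1 < ρ * F (x 0) (x 2) ∧
        u 2 < ρ * F (x 1) (x 2)} ×ˢ (Set.univ : Set (Fin 3 → ℝ))) := by
    intro x
    ext ⟨u, v⟩
    simp only [Set.mem_preimage, Set.mem_prod, Set.mem_setOf_eq, Set.mem_univ, and_true]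
    exact Iff.rfl
  have hT3sec : ∀ x : Fin 3 → ℝ, Prod.mk x ⁻¹' T₃ =
      ({u : Fin 3 → ℝ | u 0 < ρ * F (x 0) (x 1) ∧ u 1 < ρ * F (x 0) (x 2) ∧
        u 2 < ρ * F (x 1) (x 2)} ×ˢ
       {v : Fin 3 → ℝ | (Finset.univ.filter (fun e : Fin 3 =>
          v e < s * G (x (if e = 2 then 1 else 0))
            (x (if e = 0 then 1 else 2)))).card = 2}) := by
    intro x
    ext ⟨u, v⟩
    exact Iff.rfl
  have hT : μ T = ∫⁻ x, P x ∂(Measure.pi fun _ : Fin 3 => ν) := by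
    rw [show μ = (Measure.pi fun _ : Fin 3 => ν).prod
      ((Measure.pi fun _ : Fin 3 => ν).prod (Measure.pi fun _ : Fin 3 => ν)) from rfl,
      Measure.prod_apply hTmeas]
    refine lintegral_congr fun x => ?_
    rw [hTsec x, Measure.prod_prod, measure_univ, mul_one]
  have hT3 : μ T₃ = ∫⁻ x, P x * Q x ∂(Measure.pi fun _ : Fin 3 => ν) := by
    rw [show μ = (Measure.pi fun _ : Fin 3 => ν).prod
      ((Measure.pi fun _ : Fin 3 => ν).prod (Measure.pi fun _ : Fin 3 => ν)) from rfl,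
      Measure.prod_apply hT3meas]
    refine lintegral_congr fun x => ?_
    rw [hT3sec x, Measure.prod_prod]
  -- pointwise bounds
  have hPlo : ∀ x : Fin 3 → ℝ, ENNReal.ofReal ((ρ * C₁) ^ 3) ≤ P x := by
    intro x
    have e : P x = ν (Set.Iio (ρ * F (x 0) (x 1))) * ν (Set.Iio (ρ * F (x 0) (x 2)))
        * ν (Set.Iio (ρ * F (x 1) (x 2))) :=
      pi3_apply ν (Set.Iio (ρ * F (x 0) (x 1))) (Set.Iio (ρ * F (x 0) (x 2)))
        (Set.Iio (ρ * F (x 1) (x 2)))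
    rw [e]
    have key : ∀ y z : ℝ, ENNReal.ofReal (ρ * C₁) ≤ ν (Set.Iio (ρ * F y z)) := by
      intro y z
      rw [nu_Iio _ (le_of_lt (mul_pos hρ (hC₁.trans_le (hFlo y z))))
        (by nlinarith [hFhi y z, hFlo y z])]
      exact ENNReal.ofReal_le_ofReal (mul_le_mul_of_nonneg_left (hFlo y z) hρ.le)
    calc ENNReal.ofReal ((ρ * C₁) ^ 3)
        = ENNReal.ofReal (ρ * C₁) * ENNReal.ofReal (ρ * C₁) * ENNReal.ofReal (ρ * C₁) := by
          rw [show (ρ * C₁) ^ 3 = (ρ * C₁) * (ρ * C₁) * (ρ * C₁) from by ring,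
            ENNReal.ofReal_mul (by positivity), ENNReal.ofReal_mul (by positivity)]
      _ ≤ _ := mul_le_mul' (mul_le_mul' (key _ _) (key _ _)) (key _ _)
  have hQlo : ∀ x : Fin 3 → ℝ, ENNReal.ofReal (C₁ ^ 2 / 2 * s ^ 2) ≤ Q x := by
    intro x
    set a : Fin 3 → ℝ := fun e =>
      s * G (x (if e = 2 then 1 else 0)) (x (if e = 0 then 1 else 2)) with ha
    have hapos : ∀ e, 0 < a e := fun e => mul_pos hs (hC₁.trans_le (hGlo _ _))
    have hales : ∀ e, a e ≤ s := fun e => mul_le_of_le_one_right hs.le (hGhi _ _)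
    have halo : ∀ e, s * C₁ ≤ a e := fun e => mul_le_mul_of_nonneg_left (hGlo _ _) hs.le
    have hae1 : ∀ e, a e ≤ 1 := fun e => (hales e).trans hs1
    have hsub : {v : Fin 3 → ℝ | v 0 ∈ Set.Iio (a 0) ∧ v 1 ∈ Set.Iio (a 1) ∧
        v 2 ∈ Set.Ici (a 2)} ⊆
        {v : Fin 3 → ℝ | (Finset.univ.filter (fun e : Fin 3 =>
          v e < s * G (x (if e = 2 then 1 else 0))
            (x (if e = 0 then 1 else 2)))).card = 2} := by
      rintro v ⟨h0, h1, h2⟩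
      rw [Set.mem_setOf_eq, card_filter_eq_two_iff]
      exact Or.inl ⟨h0, h1, not_lt.mpr h2⟩
    calc ENNReal.ofReal (C₁ ^ 2 / 2 * s ^ 2)
        = ENNReal.ofReal (s * C₁) * ENNReal.ofReal (s * C₁) * ENNReal.ofReal (1 / 2) := by
          rw [show C₁ ^ 2 / 2 * s ^ 2 = (s * C₁) * (s * C₁) * (1 / 2) from by ring,
            ENNReal.ofReal_mul (by positivity), ENNReal.ofReal_mul (by positivity)]
      _ ≤ ν (Set.Iio (a 0)) * ν (Set.Iio (a 1)) * ν (Set.Ici (a 2)) := by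
          rw [nu_Iio _ (hapos 0).le (hae1 0), nu_Iio _ (hapos 1).le (hae1 1),
            nu_Ici _ (hapos 2).le]
          exact mul_le_mul' (mul_le_mul' (ENNReal.ofReal_le_ofReal (halo 0))
            (ENNReal.ofReal_le_ofReal (halo 1)))
            (ENNReal.ofReal_le_ofReal (by linarith [hales 2]))
      _ = (Measure.pi fun _ : Fin 3 => ν) {v : Fin 3 → ℝ | v 0 ∈ Set.Iio (a 0) ∧
            v 1 ∈ Set.Iio (a 1) ∧ v 2 ∈ Set.Ici (a 2)} := (pi3_apply ν _ _ _).symm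
      _ ≤ Q x := measure_mono hsub
  have hQhi : ∀ x : Fin 3 → ℝ, Q x ≤ ENNReal.ofReal (3 * s ^ 2) := by
    intro x
    set a : Fin 3 → ℝ := fun e =>
      s * G (x (if e = 2 then 1 else 0)) (x (if e = 0 then 1 else 2)) with ha
    have hales : ∀ e, a e ≤ s := fun e => mul_le_of_le_one_right hs.le (hGhi _ _)
    have hsub2 : {v : Fin 3 → ℝ | (Finset.univ.filter (fun e : Fin 3 =>
        v e < s * G (x (if e = 2 then 1 else 0))
          (x (if e = 0 then 1 else 2)))).card = 2} ⊆
        ({v : Fin 3 → ℝ | v 0 ∈ Set.Iio (a 0) ∧ v 1 ∈ Set.Iio (a 1) ∧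
            v 2 ∈ (Set.univ : Set ℝ)} ∪
          ({v : Fin 3 → ℝ | v 0 ∈ Set.Iio (a 0) ∧ v 1 ∈ (Set.univ : Set ℝ) ∧
            v 2 ∈ Set.Iio (a 2)} ∪
           {v : Fin 3 → ℝ | v 0 ∈ (Set.univ : Set ℝ) ∧ v 1 ∈ Set.Iio (a 1) ∧
            v 2 ∈ Set.Iio (a 2)})) := by
      intro v hv
      rw [Set.mem_setOf_eq, card_filter_eq_two_iff] at hv
      rcases hv with ⟨h0, h1, _⟩ | ⟨h0, _, h2⟩ | ⟨_, h1, h2⟩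
      · exact Or.inl ⟨h0, h1, trivial⟩
      · exact Or.inr (Or.inl ⟨h0, trivial, h2⟩)
      · exact Or.inr (Or.inr ⟨trivial, h1, h2⟩)
    have bnd : ∀ W : Set (Fin 3 → ℝ),
        (Measure.pi fun _ : Fin 3 => ν) W = ν (Set.Iio (a 0)) * ν (Set.Iio (a 1)) * ν Set.univ →
        True := fun _ _ => trivial
    have hA : (Measure.pi fun _ : Fin 3 => ν) {v : Fin 3 → ℝ | v 0 ∈ Set.Iio (a 0) ∧
        v 1 ∈ Set.Iio (a 1) ∧ v 2 ∈ (Set.univ : Set ℝ)} ≤ ENNReal.ofReal (s ^ 2) := by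
      rw [pi3_apply ν _ _ _, measure_univ, mul_one]
      calc ν (Set.Iio (a 0)) * ν (Set.Iio (a 1))
          ≤ ENNReal.ofReal s * ENNReal.ofReal s :=
            mul_le_mul' ((nu_Iio_le _).trans (ENNReal.ofReal_le_ofReal (hales 0)))
              ((nu_Iio_le _).trans (ENNReal.ofReal_le_ofReal (hales 1)))
        _ = ENNReal.ofReal (s ^ 2) := by
            rw [← ENNReal.ofReal_mul hs.le, ← pow_two]
    have hB : (Measure.pi fun _ : Fin 3 => ν) {v : Fin 3 → ℝ | v 0 ∈ Set.Iio (a 0) ∧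
        v 1 ∈ (Set.univ : Set ℝ) ∧ v 2 ∈ Set.Iio (a 2)} ≤ ENNReal.ofReal (s ^ 2) := by
      rw [pi3_apply ν _ _ _, measure_univ, mul_one]
      calc ν (Set.Iio (a 0)) * ν (Set.Iio (a 2))
          ≤ ENNReal.ofReal s * ENNReal.ofReal s :=
            mul_le_mul' ((nu_Iio_le _).trans (ENNReal.ofReal_le_ofReal (hales 0)))
              ((nu_Iio_le _).trans (ENNReal.ofReal_le_ofReal (hales 2)))
        _ = ENNReal.ofReal (s ^ 2) := by
            rw [← ENNReal.ofReal_mul hs.le, ← pow_two]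
    have hC : (Measure.pi fun _ : Fin 3 => ν) {v : Fin 3 → ℝ | v 0 ∈ (Set.univ : Set ℝ) ∧
        v 1 ∈ Set.Iio (a 1) ∧ v 2 ∈ Set.Iio (a 2)} ≤ ENNReal.ofReal (s ^ 2) := by
      rw [pi3_apply ν _ _ _, measure_univ, one_mul]
      calc ν (Set.Iio (a 1)) * ν (Set.Iio (a 2))
          ≤ ENNReal.ofReal s * ENNReal.ofReal s :=
            mul_le_mul' ((nu_Iio_le _).trans (ENNReal.ofReal_le_ofReal (hales 1)))
              ((nu_Iio_le _).trans (ENNReal.ofReal_le_ofReal (hales 2)))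
        _ = ENNReal.ofReal (s ^ 2) := by
            rw [← ENNReal.ofReal_mul hs.le, ← pow_two]
    calc Q x ≤ _ := measure_mono hsub2
      _ ≤ _ := measure_union_le _ _
      _ ≤ ENNReal.ofReal (s ^ 2) + (ENNReal.ofReal (s ^ 2) + ENNReal.ofReal (s ^ 2)) :=
          add_le_add hA (le_trans (measure_union_le _ _) (add_le_add hB hC))
      _ = ENNReal.ofReal (3 * s ^ 2) := by
          rw [← ENNReal.ofReal_add (by positivity) (by positivity),
            ← ENNReal.ofReal_add (by positivity) (by positivity)]
          congr 1
          ring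
  -- integral bounds
  have hT3lo : ENNReal.ofReal (C₁ ^ 2 / 2 * s ^ 2) * μ T ≤ μ T₃ := by
    rw [hT3, hT, ← lintegral_const_mul' _ _ ENNReal.ofReal_ne_top]
    refine lintegral_mono fun x => ?_
    rw [mul_comm]
    exact mul_le_mul_right (hQlo x) (P x)
  have hT3hi : μ T₃ ≤ ENNReal.ofReal (3 * s ^ 2) * μ T := by
    rw [hT3, hT, ← lintegral_const_mul' _ _ ENNReal.ofReal_ne_top]
    refine lintegral_mono fun x => ?_
    rw [mul_comm (ENNReal.ofReal _) (P x)]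
    exact mul_le_mul_right (hQhi x) (P x)
  have hTlo : ENNReal.ofReal ((ρ * C₁) ^ 3) ≤ μ T := by
    rw [hT]
    calc ENNReal.ofReal ((ρ * C₁) ^ 3)
        = ∫⁻ _x, ENNReal.ofReal ((ρ * C₁) ^ 3) ∂(Measure.pi fun _ : Fin 3 => ν) := by
          rw [lintegral_const, measure_univ, mul_one]
      _ ≤ _ := lintegral_mono hPlo
  haveI : IsProbabilityMeasure μ := by
    constructor
    rw [show μ = (Measure.pi fun _ : Fin 3 => ν).prod
      ((Measure.pi fun _ : Fin 3 => ν).prod (Measure.pi fun _ : Fin 3 => ν)) from rfl]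
    exact measure_univ
  have hTne : μ T ≠ ⊤ := (lt_of_le_of_lt prob_le_one ENNReal.one_lt_top).ne
  have hT3ne : μ T₃ ≠ ⊤ := (lt_of_le_of_lt prob_le_one ENNReal.one_lt_top).ne
  have hBpos : 0 < (μ T).toReal :=
    ENNReal.toReal_pos
      (lt_of_lt_of_le (ENNReal.ofReal_pos.mpr (by positivity)) hTlo).ne' hTne
  have h1 : C₁ ^ 2 / 2 * s ^ 2 * (μ T).toReal ≤ (μ T₃).toReal := by
    have h := ENNReal.toReal_mono hT3ne hT3lo
    rwa [ENNReal.toReal_mul, ENNReal.toReal_ofReal (by positivity)] at h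
  have h2 : (μ T₃).toReal ≤ 3 * s ^ 2 * (μ T).toReal := by
    have h := ENNReal.toReal_mono (ENNReal.mul_ne_top ENNReal.ofReal_ne_top hTne) hT3hi
    rwa [ENNReal.toReal_mul, ENNReal.toReal_ofReal (by positivity)] at h
  exact ⟨(le_div_iff₀ hBpos).mpr h1, (div_le_iff₀ hBpos).mpr h2⟩


/-- In the signed graphon model with `C₁ ≤ F, G ≤ 1` and `s ∈ (0, 1/2]`, the
conditional probability that a triple forms a type-3 triangle (exactly two negative
edges) given that it forms a triangle is of order `s²`: there are constants
`c, C > 0`, depending only on `C₁`, with `c s² ≤ P(type-3 ∣ triangle) ≤ C s²`.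
The model is realized on latents `x`, edge-uniforms `u` and sign-uniforms `v`. -/
theorem type3_conditional_prob_order (C₁ : ℝ) (hC₁ : 0 < C₁) :
    ∃ c C : ℝ, 0 < c ∧ 0 < C ∧
      ∀ (F G : ℝ → ℝ → ℝ),
        (Measurable fun p : ℝ × ℝ => F p.1 p.2) →
        (Measurable fun p : ℝ × ℝ => G p.1 p.2) →
        (∀ x y, F x y = F y x) → (∀ x y, G x y = G y x) →
        (∀ x y, C₁ ≤ F x y) → (∀ x y, F x y ≤ 1) →
        (∀ x y, C₁ ≤ G x y) → (∀ x y, G x y ≤ 1) →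
        ∀ ρ s : ℝ, 0 < ρ → ρ ≤ 1 → 0 < s → s ≤ 1 / 2 →
        let ν : Measure ℝ := volume.restrict (Set.Icc 0 1)
        let μ : Measure ((Fin 3 → ℝ) × (Fin 3 → ℝ) × (Fin 3 → ℝ)) :=
          (Measure.pi fun _ : Fin 3 => ν).prod
            ((Measure.pi fun _ : Fin 3 => ν).prod (Measure.pi fun _ : Fin 3 => ν))
        -- edge `0 ↔ (0,1)`, `1 ↔ (0,2)`, `2 ↔ (1,2)`
        let T : Set ((Fin 3 → ℝ) × (Fin 3 → ℝ) × (Fin 3 → ℝ)) :=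
          {ω | ω.2.1 0 < ρ * F (ω.1 0) (ω.1 1) ∧ ω.2.1 1 < ρ * F (ω.1 0) (ω.1 2) ∧
               ω.2.1 2 < ρ * F (ω.1 1) (ω.1 2)}
        let T₃ : Set ((Fin 3 → ℝ) × (Fin 3 → ℝ) × (Fin 3 → ℝ)) :=
          T ∩ {ω | (Finset.univ.filter (fun e : Fin 3 =>
                ω.2.2 e < s * G (ω.1 (if e = 2 then 1 else 0))
                              (ω.1 (if e = 0 then 1 else 2)))).card = 2}
        c * s ^ 2 ≤ (μ T₃).toReal / (μ T).toReal ∧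
          (μ T₃).toReal / (μ T).toReal ≤ C * s ^ 2 := by
  refine ⟨C₁ ^ 2 / 2, 3, by positivity, by norm_num, ?_⟩
  intro F G hF hG _ _ hFlo hFhi hGlo hGhi ρ s hρ hρ1 hs hs2
  exact type3_aux C₁ hC₁ F G hF hG hFlo hFhi hGlo hGhi ρ s hρ hρ1 hs hs2
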